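/- Let G be a TSO game of group II, i.e. both players are permitted to update buffer messages exactly before their own moves, let c_0 be a configuration, and let G' be the finite game whose configurations are those configurations of G whose total buffer content has at most max{1, |B(c_0)|} messages, with the restricted transition relation and restricted final set. Then for each player, c_0 is winning for that player in G if and only if c_0 is winning for that player in G'. -/

import Mathlib

namespace TSOGames

/-- The data of a (safety) game: a partition of the configurations into those of
player A (`isA`) and those of player B, a transition relation, and final configurations. -/
structure SGame (C : Type*) where
  isA : C → Prop
  step : C → C → Prop
  final : C → Prop

namespace SGame

variable {C : Type*} (G : SGame C)

/-- The transition relation alternates between the two players' configurations. -/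
def Alternating : Prop := ∀ c c', G.step c c' → (G.isA c ↔ ¬ G.isA c')

/-- Every configuration has at least one successor. -/
def DeadlockFree : Prop := ∀ c, ∃ c', G.step c c'

/-- Final configurations belong to player A. -/
def FinalInA : Prop := ∀ c, G.final c → G.isA c

/-- An (infinite) play: consecutive configurations are related by `step`. -/
def IsPlay (ρ : ℕ → C) : Prop := ∀ i, G.step (ρ i) (ρ (i + 1))

/-- A (history-dependent) strategy `σ`, given the strict history and the current
configuration, chooses a successor; it is valid for the player owning the
configurations satisfying `own` if it always chooses an actual successor. -/
def ValidStrat (own : C → Prop) (σ : List C → C → C) : Prop :=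
  ∀ h c, own c → G.step c (σ h c)

/-- A play is consistent with the strategy `σ` of the player owning the
configurations satisfying `own` if at every such configuration the play follows `σ`. -/
def Consistent (own : C → Prop) (σ : List C → C → C) (ρ : ℕ → C) : Prop :=
  ∀ i, own (ρ i) → ρ (i + 1) = σ (List.ofFn fun j : Fin i => ρ j) (ρ i)

/-- A play is winning for player B if it visits a final configuration. -/
def BWins (ρ : ℕ → C) : Prop := ∃ i, G.final (ρ i)

/-- A play is winning for player A if it never visits a final configuration. -/
def AWinsPlay (ρ : ℕ → C) : Prop := ¬ G.BWins ρ

/-- `σ` is a winning strategy from `c0` for the player owning the configurations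
satisfying `own`, whose plays are winning when they satisfy `winPlay`:
it is valid and every play from `c0` consistent with it is winning. -/
def WinningStrat (own : C → Prop) (winPlay : (ℕ → C) → Prop)
    (σ : List C → C → C) (c0 : C) : Prop :=
  G.ValidStrat own σ ∧
    ∀ ρ : ℕ → C, ρ 0 = c0 → G.IsPlay ρ → Consistent own σ ρ → winPlay ρ

/-- The given player has a winning strategy from `c0`. -/
def Wins (own : C → Prop) (winPlay : (ℕ → C) → Prop) (c0 : C) : Prop :=
  ∃ σ, G.WinningStrat own winPlay σ c0

/-- `c0` is winning for player A. -/
def WinA (c0 : C) : Prop := G.Wins (fun c => G.isA c) G.AWinsPlay c0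

/-- `c0` is winning for player B. -/
def WinB (c0 : C) : Prop := G.Wins (fun c => ¬ G.isA c) G.BWins c0

end SGame

/-- Restriction of a game to a subset `D` of its configurations. -/
def restrictGame {C : Type*} (G : SGame C) (D : Set C) : SGame C where
  isA := G.isA
  step := fun c c' => G.step c c' ∧ c ∈ D ∧ c' ∈ D
  final := fun c => G.final c ∧ c ∈ D

/-- The winning condition on plays for the player encoded by `b` (`true` = player A,
who wins a play iff it avoids the final configurations; `false` = player B). -/
def winPlayOf {C : Type*} (G : SGame C) (b : Bool) : (ℕ → C) → Prop :=
  fun ρ => if b then ¬ G.BWins ρ else G.BWins ρ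

end TSOGames
namespace TSOGames

/-- TSO instructions: read, write, skip, and memory fence. -/
inductive Instr (X V : Type*) : Type _
  | read (x : X) (v : V)
  | write (x : X) (v : V)
  | skip
  | fence

/-- Whether an instruction is a read instruction. -/
def Instr.isRead {X V : Type*} : Instr X V → Bool
  | .read _ _ => true
  | _ => false

/-- A concurrent program: a family of processes indexed by `I`, each a transition
system over local states `S` labeled by instructions over variables `X` and values `V`. -/
structure Program (I S X V : Type*) where
  delta : I → S → Instr X V → S → Prop

/-- A TSO configuration: local states, per-process FIFO store buffers
(newest message at the head, oldest at the end), and the shared memory. -/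
structure Conf (I S X V : Type*) where
  st : I → S
  buf : I → List (X × V)
  mem : X → V

section TSO

variable {I S X V : Type*}

/-- The value of the most recent buffered write on `x`, if any
(the buffer stores the newest message first). -/
def bufVal [DecidableEq X] : List (X × V) → X → Option V
  | [], _ => none
  | (y, v) :: rest, x => if y = x then some v else bufVal rest x

/-- The value process `ι` reads from variable `x`: the most recent buffered write of
`ι` on `x` if there is one, and the memory value otherwise. -/
def readVal [DecidableEq X] (c : Conf I S X V) (ι : I) (x : X) : V :=
  (bufVal (c.buf ι) x).getD (c.mem x)

variable [DecidableEq I] [DecidableEq X]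

/-- Execution of one instruction by process `ι` under TSO semantics. -/
inductive InstrStep (P : Program I S X V) (ι : I) (instr : Instr X V) :
    Conf I S X V → Conf I S X V → Prop
  | read (c : Conf I S X V) (x : X) (v : V) (s' : S) :
      instr = Instr.read x v → P.delta ι (c.st ι) (Instr.read x v) s' →
      readVal c ι x = v →
      InstrStep P ι instr c ⟨Function.update c.st ι s', c.buf, c.mem⟩
  | write (c : Conf I S X V) (x : X) (v : V) (s' : S) :
      instr = Instr.write x v → P.delta ι (c.st ι) (Instr.write x v) s' →
      InstrStep P ι instr c
        ⟨Function.update c.st ι s', Function.update c.buf ι ((x, v) :: c.buf ι), c.mem⟩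
  | skip (c : Conf I S X V) (s' : S) :
      instr = Instr.skip → P.delta ι (c.st ι) Instr.skip s' →
      InstrStep P ι instr c ⟨Function.update c.st ι s', c.buf, c.mem⟩
  | fence (c : Conf I S X V) (s' : S) :
      instr = Instr.fence → P.delta ι (c.st ι) Instr.fence s' → c.buf ι = [] →
      InstrStep P ι instr c ⟨Function.update c.st ι s', c.buf, c.mem⟩

/-- An update step: the oldest buffered message of some process is committed to memory. -/
inductive UpdStep : Conf I S X V → Conf I S X V → Prop
  | mk (c : Conf I S X V) (ι : I) (x : X) (v : V) (w : List (X × V)) :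
      c.buf ι = w ++ [(x, v)] →
      UpdStep c ⟨c.st, Function.update c.buf ι w, Function.update c.mem x v⟩

/-- Finitely many update steps. -/
def Upds : Conf I S X V → Conf I S X V → Prop := Relation.ReflTransGen UpdStep

/-- `flush` maps every configuration `c` to the configuration `c̄` obtained by
updating all buffered messages to the memory: `c →up* c̄` and all buffers of `c̄` are empty. -/
def IsFlush (flush : Conf I S X V → Conf I S X V) : Prop :=
  ∀ c, Upds c (flush c) ∧ ∀ ι, (flush c).buf ι = []

/-- Update steps by a player, if she is allowed to perform them (otherwise nothing happens). -/
def OptUpds (allowed : Bool) (c c' : Conf I S X V) : Prop :=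
  if allowed then Upds c c' else c' = c

/-- A move of a player whose permissions to update before resp. after her move are
given by `perm`: optional updates before, one instruction, optional updates after. -/
def Move (P : Program I S X V) (perm : Bool × Bool) (c c' : Conf I S X V) : Prop :=
  ∃ c1 c2, OptUpds perm.1 c c1 ∧ (∃ ι instr, InstrStep P ι instr c1 c2) ∧
    OptUpds perm.2 c2 c'

/-- The TSO game induced by a program `P`, update permissions
`permA`/`permB` = (may update before her move, may update after her move)
for players A and B, and a set `SF` of final local states. Game configurations are
TSO configurations annotated by `true` (player A's) or `false` (player B's). -/
def tsoGame (P : Program I S X V) (permA permB : Bool × Bool) (SF : Set S) :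
    SGame (Conf I S X V × Bool) where
  isA := fun c => c.2 = true
  step := fun c c' =>
    (c.2 = true ∧ c'.2 = false ∧ Move P permA c.1 c'.1) ∨
    (c.2 = false ∧ c'.2 = true ∧ Move P permB c.1 c'.1)
  final := fun c => c.2 = true ∧ ∃ ι, c.1.st ι ∈ SF

/-- The configurations owned by the player encoded by `b` (`true` = player A). -/
def ownOf (b : Bool) : Conf I S X V × Bool → Prop := fun c => c.2 = b

/-- The total number of buffered messages of a configuration. -/
def totalBuf [Fintype I] (c : Conf I S X V) : ℕ := ∑ ι, (c.buf ι).length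

end TSO

end TSOGames

/-!
Player B's winning region is the attractor of the final configurations, built by transfinite
induction. Its ranks give positional strategies: B lowers the rank inside the attractor, A stays
outside it. So B wins from `c₀` iff `c₀` lies in the attractor, and A wins iff it does not.

In a group II game the mover may update before her move. Let `N = max 1 |B(c₀)|`. Any move that
takes the buffers past `N` must be a write, and she can commit one more message before making
it. The resulting configuration has at most `N` messages and is reached from the overflowing one
by an update. Updates before a move only enlarge the mover's options. So the attractors of the
game and of its restriction to at most `N` messages agree on configurations with at most `N`
messages. If some configuration is deadlocked, then so is its flush, which belongs to both
games. In that case neither player has a strategy in either game.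
-/

namespace TSOGames

namespace SGame

universe u

section Attractor

variable {C : Type u} (H : SGame C) (pA pB : C → Prop)

/-- From `c`, player B (owning `pB`) can force a visit to a final configuration within `o`
rounds. -/
inductive AttrAt : Ordinal.{u} → C → Prop
  | final {o c} : H.final c → AttrAt o c
  | stepB {o o' c c'} : pB c → H.step c c' → o' < o → AttrAt o' c' → AttrAt o c
  | stepA {o c} (r : C → Ordinal.{u}) : pA c → (∀ c', H.step c c' → r c' < o) →
      (∀ c', H.step c c' → AttrAt (r c') c') → AttrAt o c

def Attr (c : C) : Prop := ∃ o, H.AttrAt pA pB o c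

noncomputable def attrRank (c : C) : Ordinal.{u} := sInf {o | H.AttrAt pA pB o c}

variable {H pA pB} {c c' : C}

theorem Attr.attrAt_attrRank (h : H.Attr pA pB c) : H.AttrAt pA pB (H.attrRank pA pB c) c :=
  csInf_mem h

theorem attrRank_le {o : Ordinal.{u}} (h : H.AttrAt pA pB o c) : H.attrRank pA pB c ≤ o :=
  csInf_le' h

theorem attr_of_final (h : H.final c) : H.Attr pA pB c := ⟨0, .final h⟩

theorem attr_of_step (hB : pB c) (hs : H.step c c') (h : H.Attr pA pB c') : H.Attr pA pB c :=
  ⟨_, .stepB hB hs (Order.lt_succ _) h.attrAt_attrRank⟩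

theorem attr_of_forall_step (hA : pA c) (h : ∀ c', H.step c c' → H.Attr pA pB c') :
    H.Attr pA pB c := by
  refine ⟨Order.succ (⨆ d : {d // H.step c d}, H.attrRank pA pB d), .stepA _ hA
    (fun c' hs => Order.lt_succ_of_le ?_) fun c' hs => (h c' hs).attrAt_attrRank⟩
  exact Ordinal.le_iSup (fun d : {d // H.step c d} => H.attrRank pA pB d) ⟨c', hs⟩

theorem Attr.exists_step_attrRank_lt (h : H.Attr pA pB c) (hf : ¬ H.final c)
    (hs : H.step c c') :
    ∃ d, H.step c d ∧ H.Attr pA pB d ∧ H.attrRank pA pB d < H.attrRank pA pB c := by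
  rcases h.attrAt_attrRank with hf' | ⟨-, hs', ho, h'⟩ | ⟨r, -, hlt, hall⟩
  · exact absurd hf' hf
  · exact ⟨_, hs', ⟨_, h'⟩, (attrRank_le h').trans_lt ho⟩
  · exact ⟨c', hs, ⟨_, hall c' hs⟩, (attrRank_le (hall c' hs)).trans_lt (hlt c' hs)⟩

theorem Attr.attrRank_lt_of_step (h : H.Attr pA pB c) (hf : ¬ H.final c) (hB : ¬ pB c)
    (hs : H.step c c') : H.Attr pA pB c' ∧ H.attrRank pA pB c' < H.attrRank pA pB c := by
  rcases h.attrAt_attrRank with hf' | ⟨hB', -⟩ | ⟨r, -, hlt, hall⟩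
  · exact absurd hf' hf
  · exact absurd hB' hB
  · exact ⟨⟨_, hall c' hs⟩, (attrRank_le (hall c' hs)).trans_lt (hlt c' hs)⟩

end Attractor

section Strategies

variable {C : Type u} (H : SGame C)

/-- A successor `c'` of `c` with `P c c'` if there is one, otherwise an arbitrary successor. -/
noncomputable def pick (P : C → C → Prop) (c : C) : C :=
  @Classical.epsilon _ ⟨c⟩ fun c' => H.step c c' ∧ ((∃ d, H.step c d ∧ P c d) → P c c')

noncomputable def trapStrat (pA pB : C → Prop) : List C → C → C :=
  fun _ => H.pick fun _ c' => ¬ H.Attr pA pB c'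

noncomputable def rankStrat (pA pB : C → Prop) : List C → C → C :=
  fun _ => H.pick fun c c' => H.Attr pA pB c' ∧ H.attrRank pA pB c' < H.attrRank pA pB c

variable {H} {pA pB own : C → Prop} {c c0 : C}

theorem pick_spec (P : C → C → Prop) (hc : ∃ c', H.step c c') :
    H.step c (H.pick P c) ∧ ((∃ d, H.step c d ∧ P c d) → P c (H.pick P c)) := by
  have hex : ∃ c', H.step c c' ∧ ((∃ d, H.step c d ∧ P c d) → P c c') := by
    by_cases hd : ∃ d, H.step c d ∧ P c d
    · obtain ⟨d, hs, hP⟩ := hd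
      exact ⟨d, hs, fun _ => hP⟩
    · obtain ⟨c', hc'⟩ := hc
      exact ⟨c', hc', fun h => absurd h hd⟩
  exact Classical.epsilon_spec hex

theorem validStrat_pick (P : C → C → Prop) (hdf : ∀ c, own c → ∃ c', H.step c c') :
    H.ValidStrat own fun _ => H.pick P :=
  fun _ c hc => (pick_spec P (hdf c hc)).1

theorem rankStrat_spec (h : H.Attr pA pB c) (hf : ¬ H.final c) (hs : H.step c c')
    (hist : List C) :
    H.Attr pA pB (H.rankStrat pA pB hist c) ∧
      H.attrRank pA pB (H.rankStrat pA pB hist c) < H.attrRank pA pB c :=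
  (pick_spec (fun c d => H.Attr pA pB d ∧ H.attrRank pA pB d < H.attrRank pA pB c) ⟨c', hs⟩).2
    (h.exists_step_attrRank_lt hf hs)

theorem trapStrat_spec (hA : pA c) (h : ¬ H.Attr pA pB c) (hs : H.step c c') (hist : List C) :
    ¬ H.Attr pA pB (H.trapStrat pA pB hist c) := by
  refine (pick_spec (fun _ d => ¬ H.Attr pA pB d) ⟨c', hs⟩).2 ?_
  by_contra! hall
  exact h (attr_of_forall_step hA hall)

theorem bWins_of_consistent_rankStrat {ρ : ℕ → C} (hρ : H.IsPlay ρ)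
    (hcons : Consistent pB (H.rankStrat pA pB) ρ) (h0 : H.Attr pA pB (ρ 0)) : H.BWins ρ := by
  by_contra hnw
  have hnf : ∀ i, ¬ H.final (ρ i) := fun i hf => hnw ⟨i, hf⟩
  have hdesc : ∀ i, H.Attr pA pB (ρ i) →
      H.Attr pA pB (ρ (i + 1)) ∧ H.attrRank pA pB (ρ (i + 1)) < H.attrRank pA pB (ρ i) := by
    intro i hi
    by_cases hB : pB (ρ i)
    · rw [hcons i hB]
      exact rankStrat_spec hi (hnf i) (hρ i) _
    · exact hi.attrRank_lt_of_step (hnf i) hB (hρ i)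
  have hattr : ∀ i, H.Attr pA pB (ρ i) := fun i => Nat.rec h0 (fun i hi => (hdesc i hi).1) i
  obtain ⟨i, hi⟩ := WellFounded.not_rel_apply_succ (r := (· < ·))
    fun i => H.attrRank pA pB (ρ i)
  exact hi (hdesc i (hattr i)).2

theorem not_bWins_of_consistent_trapStrat (hown : ∀ c c', H.step c c' → pA c ∨ pB c)
    {ρ : ℕ → C} (hρ : H.IsPlay ρ) (hcons : Consistent pA (H.trapStrat pA pB) ρ)
    (h0 : ¬ H.Attr pA pB (ρ 0)) : ¬ H.BWins ρ := by
  have hstay : ∀ i, ¬ H.Attr pA pB (ρ i) → ¬ H.Attr pA pB (ρ (i + 1)) := by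
    intro i hi
    by_cases hA : pA (ρ i)
    · rw [hcons i hA]
      exact trapStrat_spec hA hi (hρ i) _
    · exact fun h => hi (attr_of_step ((hown _ _ (hρ i)).resolve_left hA) (hρ i) h)
  rintro ⟨i, hf⟩
  exact Nat.rec h0 hstay i (attr_of_final hf)

end Strategies

section Determinacy

variable {C : Type u}

def histSeq (F : List C → C → C) (c0 : C) : ℕ → List C × C
  | 0 => ([], c0)
  | n + 1 => ((histSeq F c0 n).1 ++ [(histSeq F c0 n).2], F (histSeq F c0 n).1 (histSeq F c0 n).2)

theorem exists_seq_next (F : List C → C → C) (c0 : C) :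
    ∃ ρ : ℕ → C, ρ 0 = c0 ∧ ∀ n, ρ (n + 1) = F (List.ofFn fun j : Fin n => ρ j) (ρ n) := by
  have hhist : ∀ n, (histSeq F c0 n).1 = List.ofFn fun j : Fin n => (histSeq F c0 j).2 := by
    intro n
    induction n with
    | zero => rfl
    | succ n ih =>
        rw [List.ofFn_succ', List.concat_eq_append]
        simp only [Fin.val_castSucc, Fin.val_last, ← ih]
        rfl
  exact ⟨fun n => (histSeq F c0 n).2, rfl, fun n => by rw [← hhist]; rfl⟩

variable {H : SGame C} {pA pB : C → Prop} {c0 : C}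

theorem exists_consistent_play (hown : ∀ c c', H.step c c' → pA c' ∨ pB c')
    (hdisj : ∀ c, ¬ (pA c ∧ pB c)) {σA σB : List C → C → C} (hσA : H.ValidStrat pA σA)
    (hσB : H.ValidStrat pB σB) (hc0 : pA c0 ∨ pB c0) :
    ∃ ρ, ρ 0 = c0 ∧ H.IsPlay ρ ∧ Consistent pA σA ρ ∧ Consistent pB σB ρ := by
  classical
  obtain ⟨ρ, h0, hnext⟩ := exists_seq_next (fun h c => if pA c then σA h c else σB h c) c0
  have hconsA : Consistent pA σA ρ := fun i hA => by rw [hnext, if_pos hA]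
  have hconsB : Consistent pB σB ρ := fun i hB => by
    rw [hnext, if_neg fun hA => hdisj _ ⟨hA, hB⟩]
  have hstep : ∀ i, pA (ρ i) ∨ pB (ρ i) → H.step (ρ i) (ρ (i + 1)) := by
    rintro i (hA | hB)
    · exact hconsA i hA ▸ hσA _ _ hA
    · exact hconsB i hB ▸ hσB _ _ hB
  have howned : ∀ i, pA (ρ i) ∨ pB (ρ i) :=
    fun i => Nat.rec (h0 ▸ hc0) (fun i hi => hown _ _ (hstep i hi)) i
  exact ⟨ρ, h0, fun i => hstep i (howned i), hconsA, hconsB⟩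

theorem Wins.exists_step {own : C → Prop} {win : (ℕ → C) → Prop} (hw : H.Wins own win c0)
    {c : C} (hc : own c) : ∃ c', H.step c c' :=
  let ⟨_, hσ, _⟩ := hw
  ⟨_, hσ [] c hc⟩

theorem wins_of_attr (hdfB : ∀ c, pB c → ∃ c', H.step c c') (h : H.Attr pA pB c0) :
    H.Wins pB H.BWins c0 :=
  ⟨H.rankStrat pA pB, validStrat_pick _ hdfB,
    fun _ h0 hρ hcons => bWins_of_consistent_rankStrat hρ hcons (h0 ▸ h)⟩

theorem wins_of_not_attr (hown : ∀ c c', H.step c c' → pA c ∨ pB c)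
    (hdfA : ∀ c, pA c → ∃ c', H.step c c') (h : ¬ H.Attr pA pB c0) :
    H.Wins pA H.AWinsPlay c0 :=
  ⟨H.trapStrat pA pB, validStrat_pick _ hdfA,
    fun _ h0 hρ hcons => not_bWins_of_consistent_trapStrat hown hρ hcons (h0 ▸ h)⟩

theorem not_wins_of_attr (hown : ∀ c c', H.step c c' → pA c' ∨ pB c')
    (hdisj : ∀ c, ¬ (pA c ∧ pB c)) (hdfB : ∀ c, pB c → ∃ c', H.step c c')
    (hc0 : pA c0 ∨ pB c0) (h : H.Attr pA pB c0) : ¬ H.Wins pA H.AWinsPlay c0 := by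
  rintro ⟨σ, hσ, hwin⟩
  obtain ⟨ρ, h0, hρ, hconsA, hconsB⟩ :=
    exists_consistent_play hown hdisj hσ (validStrat_pick _ hdfB) hc0
  exact hwin ρ h0 hρ hconsA (bWins_of_consistent_rankStrat (pA := pA) hρ hconsB (h0 ▸ h))

theorem not_wins_of_not_attr (hown : ∀ c c', H.step c c' → (pA c ∨ pB c) ∧ (pA c' ∨ pB c'))
    (hdisj : ∀ c, ¬ (pA c ∧ pB c)) (hdfA : ∀ c, pA c → ∃ c', H.step c c')
    (hc0 : pA c0 ∨ pB c0) (h : ¬ H.Attr pA pB c0) : ¬ H.Wins pB H.BWins c0 := by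
  rintro ⟨σ, hσ, hwin⟩
  obtain ⟨ρ, h0, hρ, hconsA, hconsB⟩ :=
    exists_consistent_play (fun c c' hs => (hown c c' hs).2) hdisj (validStrat_pick _ hdfA) hσ hc0
  exact not_bWins_of_consistent_trapStrat (fun c c' hs => (hown c c' hs).1) hρ hconsA (h0 ▸ h)
    (hwin ρ h0 hρ hconsB)

theorem wins_iff_attr (own : Bool → C → Prop)
    (halt : ∀ c c', H.step c c' → own true c ∧ own false c' ∨ own false c ∧ own true c')
    (hdisj : ∀ c, ¬ (own true c ∧ own false c)) (hdf : ∀ b c, own b c → ∃ c', H.step c c')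
    (hc0 : own true c0 ∨ own false c0) (p : Bool) :
    H.Wins (own p) (winPlayOf H p) c0 ↔ (H.Attr (own true) (own false) c0 ↔ p = false) := by
  have hown : ∀ c c', H.step c c' →
      (own true c ∨ own false c) ∧ (own true c' ∨ own false c') := by
    intro c c' hs
    rcases halt c c' hs with ⟨h, h'⟩ | ⟨h, h'⟩
    exacts [⟨.inl h, .inr h'⟩, ⟨.inr h, .inl h'⟩]
  cases p
  · simp only [iff_true]
    exact ⟨fun hw => by_contra fun h => not_wins_of_not_attr hown hdisj (hdf true) hc0 h hw,
      wins_of_attr (hdf false)⟩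
  · simp only [Bool.true_eq_false, iff_false]
    refine ⟨fun hw h => ?_, wins_of_not_attr (fun c c' hs => (hown c c' hs).1) (hdf true)⟩
    exact not_wins_of_attr (fun c c' hs => (hown c c' hs).2) hdisj (hdf false) hc0 h hw

end Determinacy

end SGame

section TSO

variable {I S X V : Type} [DecidableEq I] {c c' d : Conf I S X V}

theorem totalBuf_update_buf [Fintype I] (c : Conf I S X V) (ι : I) (l : List (X × V)) (st : I → S)
    (mem : X → V) :
    totalBuf ⟨st, Function.update c.buf ι l, mem⟩ + (c.buf ι).length = totalBuf c + l.length := by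
  simp only [totalBuf, Function.apply_update (fun _ (l : List (X × V)) => l.length),
    Finset.sum_update_of_mem (Finset.mem_univ ι)]
  rw [← Finset.add_sum_erase _ _ (Finset.mem_univ ι), Finset.sdiff_singleton_eq_erase]
  ring

variable [DecidableEq X] {P : Program I S X V}

theorem UpdStep.st_eq (h : UpdStep c d) : d.st = c.st := by
  cases h; rfl

theorem Upds.st_eq (h : Upds c d) : d.st = c.st := by
  induction h with
  | refl => rfl
  | tail _ h ih => rw [h.st_eq, ih]

theorem move_iff : Move P (true, false) c c' ↔
    ∃ c1, Upds c c1 ∧ ∃ ι instr, InstrStep P ι instr c1 c' := by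
  simp [Move, OptUpds]

theorem Move.of_upds (hu : Upds c d) (hm : Move P (true, false) d c') :
    Move P (true, false) c c' := by
  obtain ⟨c1, hu', hi⟩ := move_iff.1 hm
  exact move_iff.2 ⟨c1, hu.trans hu', hi⟩

variable [Fintype I]

theorem UpdStep.totalBuf_eq (h : UpdStep c d) : totalBuf c = totalBuf d + 1 := by
  obtain ⟨ι, x, v, w, hw⟩ := h
  have := totalBuf_update_buf c ι w c.st (Function.update c.mem x v)
  rw [hw, List.length_append, List.length_singleton] at this
  omega

theorem Upds.totalBuf_le (h : Upds c d) : totalBuf d ≤ totalBuf c := by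
  induction h with
  | refl => exact le_rfl
  | tail _ h ih => have := h.totalBuf_eq; omega

theorem exists_updStep (h : 0 < totalBuf c) : ∃ d, UpdStep c d := by
  obtain ⟨ι, -, hι⟩ := Finset.exists_ne_zero_of_sum_ne_zero h.ne'
  have hne : c.buf ι ≠ [] := by simpa using hι
  exact ⟨_, .mk c ι _ _ _ (List.dropLast_append_getLast hne).symm⟩

theorem exists_upds_totalBuf_eq_zero (c : Conf I S X V) : ∃ d, Upds c d ∧ totalBuf d = 0 := by
  induction hn : totalBuf c generalizing c with
  | zero => exact ⟨c, .refl, hn⟩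
  | succ n ih =>
    obtain ⟨d, hd⟩ := exists_updStep (c := c) (by omega)
    obtain ⟨e, he, he0⟩ := ih d (by have := hd.totalBuf_eq; omega)
    exact ⟨e, .head hd he, he0⟩

theorem exists_stuck_of_not_forall_move
    (h : ¬ ∀ c : Conf I S X V, ∃ c', Move P (true, false) c c') :
    ∃ d : Conf I S X V, totalBuf d = 0 ∧ ∀ c', ¬ Move P (true, false) d c' := by
  obtain ⟨c, hc⟩ := not_forall.1 h
  obtain ⟨d, hu, hd⟩ := exists_upds_totalBuf_eq_zero c
  exact ⟨d, hd, fun c' hm => hc ⟨c', hm.of_upds hu⟩⟩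

variable {ι : I} {instr : Instr X V}

theorem InstrStep.totalBuf_le (h : InstrStep P ι instr c c') : totalBuf c' ≤ totalBuf c + 1 := by
  cases h with
  | write x v s' =>
    have := totalBuf_update_buf c ι ((x, v) :: c.buf ι) (Function.update c.st ι s') c.mem
    rw [List.length_cons] at this
    omega
  | _ => exact Nat.le_succ _

/-- A write that makes the buffers grow commutes with committing an older message. -/
theorem InstrStep.exists_updStep_of_lt (h : InstrStep P ι instr c c')
    (hlt : totalBuf c < totalBuf c') (hu : UpdStep c d) :
    ∃ d', InstrStep P ι instr d d' ∧ UpdStep c' d' := by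
  cases h with
  | write x v s' heq hδ =>
    obtain ⟨κ, y, u, w, hw⟩ := hu
    have hbuf : Function.update c.buf ι ((x, v) :: c.buf ι) κ
        = (if κ = ι then (x, v) :: w else w) ++ [(y, u)] := by
      split_ifs with hκ
      · subst hκ; simp [hw]
      · simp [Function.update_of_ne hκ, hw]
    refine ⟨_, ?_, .mk _ κ y u _ hbuf⟩
    convert InstrStep.write ⟨c.st, Function.update c.buf κ w, Function.update c.mem y u⟩
      x v s' heq hδ using 2
    funext j
    simp only [Function.update_apply]
    split_ifs <;> subst_vars <;> simp_all only [not_true_eq_false]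
  | _ => exact absurd hlt (lt_irrefl _)

/-- If the instruction is a write that overflows the bound, commit one more message before it. -/
theorem exists_bounded_move {N : ℕ} (hN : 1 ≤ N) (hc : totalBuf c ≤ N)
    (hm : Move P (true, false) c c') :
    ∃ d, Move P (true, false) c d ∧ Upds c' d ∧ totalBuf d ≤ N := by
  by_cases hle : totalBuf c' ≤ N
  · exact ⟨c', hm, .refl, hle⟩
  obtain ⟨c1, hu, ι, instr, hi⟩ := move_iff.1 hm
  have h1 := hu.totalBuf_le
  have h2 := hi.totalBuf_le
  obtain ⟨d, hd⟩ := exists_updStep (c := c1) (by omega)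
  obtain ⟨d', hi', hd'⟩ := hi.exists_updStep_of_lt (by omega) hd
  have h3 := hd'.totalBuf_eq
  exact ⟨d', move_iff.2 ⟨d, hu.tail hd, ι, instr, hi'⟩, .single hd', by omega⟩

end TSO

section Game

open SGame

variable {I S X V : Type} [DecidableEq I] [DecidableEq X] {P : Program I S X V} {SF : Set S}

local notation "𝒢" => tsoGame P (true, false) (true, false) SF

theorem tsoGame_step_iff {a b : Conf I S X V × Bool} :
    (𝒢).step a b ↔ b.2 = !a.2 ∧ Move P (true, false) a.1 b.1 := by
  obtain ⟨a1, a2⟩ := a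
  obtain ⟨b1, b2⟩ := b
  cases a2 <;> cases b2 <;> simp [tsoGame]

theorem tsoGame_alternates {c c' : Conf I S X V × Bool} (hs : (𝒢).step c c') :
    c.2 = true ∧ c'.2 = false ∨ c.2 = false ∧ c'.2 = true := by
  rw [tsoGame_step_iff] at hs
  cases h : c.2 <;> simp [hs.1, h]

theorem tsoGame_exists_step (hlive : ∀ c : Conf I S X V, ∃ c', Move P (true, false) c c')
    (c : Conf I S X V × Bool) : ∃ c', (𝒢).step c c' :=
  let ⟨d, hd⟩ := hlive c.1
  ⟨(d, !c.2), tsoGame_step_iff.2 ⟨rfl, hd⟩⟩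

theorem attrAt_of_upds {x y : Conf I S X V} {o : Ordinal} (hu : Upds x y)
    (h : (𝒢).AttrAt (ownOf true) (ownOf false) o (x, true)) :
    (𝒢).AttrAt (ownOf true) (ownOf false) o (y, true) := by
  rcases h with ⟨-, ι, hι⟩ | ⟨hB, -⟩ | ⟨r, -, hlt, hall⟩
  · exact .final ⟨rfl, ι, hu.st_eq ▸ hι⟩
  · cases hB
  · have hstep : ∀ c', (𝒢).step (y, true) c' → (𝒢).step (x, true) c' := fun c' hs => by
      rw [tsoGame_step_iff] at hs ⊢
      exact ⟨hs.1, hs.2.of_upds hu⟩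
    exact .stepA r rfl (fun c' hs => hlt c' (hstep c' hs)) fun c' hs => hall c' (hstep c' hs)

theorem attr_of_upds {x y : Conf I S X V} (hu : Upds x y)
    (h : (𝒢).Attr (ownOf true) (ownOf false) (y, false)) :
    (𝒢).Attr (ownOf true) (ownOf false) (x, false) := by
  obtain ⟨o, h⟩ := h
  rcases h with ⟨hf, -⟩ | ⟨-, hs, -, h'⟩ | ⟨r, hA, -⟩
  · cases hf
  · rw [tsoGame_step_iff] at hs
    exact attr_of_step rfl (tsoGame_step_iff.2 ⟨hs.1, hs.2.of_upds hu⟩) ⟨_, h'⟩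
  · cases hA

theorem wins_tsoGame_iff (hlive : ∀ c : Conf I S X V, ∃ c', Move P (true, false) c c')
    (c0 : Conf I S X V × Bool) (p : Bool) :
    (𝒢).Wins (ownOf p) (winPlayOf 𝒢 p) c0 ↔ ((𝒢).Attr (ownOf true) (ownOf false) c0 ↔ p = false) :=
  wins_iff_attr ownOf (fun _ _ hs => tsoGame_alternates hs)
    (fun _ h => Bool.false_ne_true (h.2.symm.trans h.1))
    (fun _ c _ => tsoGame_exists_step hlive c) (Bool.eq_false_or_eq_true c0.2) p

variable [Fintype I] {N : ℕ}

local notation "𝒟" => Set.ofPred fun c : Conf I S X V × Bool => totalBuf (Prod.fst c) ≤ N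
local notation "𝒢'" => restrictGame 𝒢 𝒟

theorem attr_restrict_of_attrAt (hN : 1 ≤ N) (o : Ordinal) :
    ∀ c, (𝒢).AttrAt (ownOf true) (ownOf false) o c → c ∈ 𝒟 →
      (𝒢').Attr (fun c => c.2 = true ∧ c ∈ 𝒟) (fun c => c.2 = false ∧ c ∈ 𝒟) c := by
  induction o using WellFoundedLT.induction with
  | _ o ih =>
  rintro ⟨x, b⟩ (hf | @⟨_, o', _, ⟨y, b'⟩, hB, hs, ho, h'⟩ | ⟨r, hA, hlt, hall⟩) hc
  · exact attr_of_final ⟨hf, hc⟩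
  · obtain ⟨hb', hm⟩ := tsoGame_step_iff.1 hs
    obtain rfl : b = false := hB
    obtain rfl : b' = true := hb'
    obtain ⟨d, hm, hu, hd⟩ := exists_bounded_move hN hc hm
    exact attr_of_step ⟨rfl, hc⟩ ⟨tsoGame_step_iff.2 ⟨rfl, hm⟩, hc, hd⟩
      (ih _ ho (d, true) (attrAt_of_upds hu h') hd)
  · exact attr_of_forall_step ⟨hA, hc⟩ fun c' ⟨hs, _, hc'⟩ =>
      ih _ (hlt c' hs) c' (hall c' hs) hc'

theorem attr_of_attrAt_restrict (hN : 1 ≤ N) {o : Ordinal} {c : Conf I S X V × Bool}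
    (h : (𝒢').AttrAt (fun c => c.2 = true ∧ c ∈ 𝒟) (fun c => c.2 = false ∧ c ∈ 𝒟) o c) :
    (𝒢).Attr (ownOf true) (ownOf false) c := by
  induction h with
  | final hf => exact attr_of_final hf.1
  | stepB hB hs _ _ ih => exact attr_of_step hB.1 hs.1 ih
  | stepA r hA _ _ ih =>
    refine attr_of_forall_step hA.1 fun ⟨y, b'⟩ hs => ?_
    obtain ⟨hb', hm⟩ := tsoGame_step_iff.1 hs
    obtain ⟨d, hm', hu, hd⟩ := exists_bounded_move hN hA.2 hm
    have hd' := ih (d, b') ⟨tsoGame_step_iff.2 ⟨hb', hm'⟩, hA.2, hd⟩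
    obtain rfl : b' = false := by simpa [hA.1] using hb'
    exact attr_of_upds hu hd'

theorem attr_restrict_iff (hN : 1 ≤ N) {c : Conf I S X V × Bool} (hc : c ∈ 𝒟) :
    (𝒢').Attr (fun c => c.2 = true ∧ c ∈ 𝒟) (fun c => c.2 = false ∧ c ∈ 𝒟) c ↔
      (𝒢).Attr (ownOf true) (ownOf false) c :=
  ⟨fun ⟨_, h⟩ => attr_of_attrAt_restrict hN h, fun ⟨o, h⟩ => attr_restrict_of_attrAt hN o c h hc⟩

theorem restrict_alternates {c c' : Conf I S X V × Bool} (hs : (𝒢').step c c') :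
    (c.2 = true ∧ c ∈ 𝒟) ∧ (c'.2 = false ∧ c' ∈ 𝒟) ∨
      (c.2 = false ∧ c ∈ 𝒟) ∧ (c'.2 = true ∧ c' ∈ 𝒟) := by
  obtain ⟨hs, hc, hc'⟩ := hs
  rcases tsoGame_alternates hs with ⟨h, h'⟩ | ⟨h, h'⟩
  exacts [.inl ⟨⟨h, hc⟩, h', hc'⟩, .inr ⟨⟨h, hc⟩, h', hc'⟩]

theorem restrict_exists_step (hN : 1 ≤ N)
    (hlive : ∀ c : Conf I S X V, ∃ c', Move P (true, false) c c')
    {c : Conf I S X V × Bool} (hc : c ∈ 𝒟) : ∃ c', (𝒢').step c c' := by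
  obtain ⟨d, hd⟩ := hlive c.1
  obtain ⟨e, he, -, hle⟩ := exists_bounded_move hN hc hd
  exact ⟨(e, !c.2), tsoGame_step_iff.2 ⟨rfl, he⟩, hc, hle⟩

theorem wins_restrict_iff (hN : 1 ≤ N)
    (hlive : ∀ c : Conf I S X V, ∃ c', Move P (true, false) c c')
    {c0 : Conf I S X V × Bool} (hc0 : c0 ∈ 𝒟) (p : Bool) :
    (𝒢').Wins (fun c => c.2 = p ∧ c ∈ 𝒟) (winPlayOf 𝒢' p) c0 ↔
      ((𝒢').Attr (fun c => c.2 = true ∧ c ∈ 𝒟) (fun c => c.2 = false ∧ c ∈ 𝒟) c0 ↔ p = false) :=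
  wins_iff_attr (fun (b : Bool) (c : Conf I S X V × Bool) => c.2 = b ∧ c ∈ 𝒟)
    (fun _ _ => restrict_alternates) (fun _ h => Bool.false_ne_true (h.2.1.symm.trans h.1.1))
    (fun _ _ h => restrict_exists_step hN hlive h.2)
    ((Bool.eq_false_or_eq_true c0.2).imp (⟨·, hc0⟩) (⟨·, hc0⟩)) p

end Game

/-- Group II: for each player, `c0` is winning for that player in `G` if and only if
`c0` is winning for that player in the finite game `G'` restricted to configurations
with at most `max 1 |B(c0)|` buffered messages. -/
theorem statement10 {I S X V : Type} [DecidableEq I] [DecidableEq X] [Fintype I]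
    (P : Program I S X V) (SF : Set S)
    (G : SGame (Conf I S X V × Bool))
    (hG : G = tsoGame P (true, false) (true, false) SF)
    (c0 : Conf I S X V × Bool)
    (D : Set (Conf I S X V × Bool))
    (hD : D = {c | totalBuf c.1 ≤ max 1 (totalBuf c0.1)})
    (G' : SGame (Conf I S X V × Bool)) (hG' : G' = restrictGame G D) :
    ∀ p : Bool,
      (G.Wins (ownOf p) (winPlayOf G p) c0 ↔
        G'.Wins (fun c => c.2 = p ∧ c ∈ D) (winPlayOf G' p) c0) := by
  subst hG hD hG'
  intro p
  have hN : 1 ≤ max 1 (totalBuf c0.1) := le_max_left _ _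
  have hc0 : totalBuf c0.1 ≤ max 1 (totalBuf c0.1) := le_max_right _ _
  by_cases hlive : ∀ c : Conf I S X V, ∃ c', Move P (true, false) c c'
  · rw [wins_tsoGame_iff hlive, wins_restrict_iff hN hlive hc0, attr_restrict_iff hN hc0]
  · obtain ⟨d, hd, hstuck⟩ := exists_stuck_of_not_forall_move hlive
    refine iff_of_false (fun hw => ?_) (fun hw => ?_)
    · obtain ⟨_, hs⟩ := hw.exists_step (c := (d, p)) rfl
      exact hstuck _ (tsoGame_step_iff.1 hs).2
    · have hdD : totalBuf d ≤ max 1 (totalBuf c0.1) := hd ▸ Nat.zero_le _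
      obtain ⟨_, hs, -⟩ := hw.exists_step (c := (d, p)) ⟨rfl, hdD⟩
      exact hstuck _ (tsoGame_step_iff.1 hs).2

end TSOGames
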